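/- Let [L_1, R_1), …, [L_k, R_k) be pairwise disjoint nonempty half-open subintervals of [0, W), ordered so that R_i ≤ L_{i+1}, and let T = Σ_{i=1}^k (R_i − L_i). Define f : [0, W − T) → [0, W) by f(r) = r + Σ_{i : L_i' ≤ r} (R_i − L_i), where L_i' = L_i − Σ_{j < i} (R_j − L_j). Then f is a strictly increasing bijection from [0, W − T) onto [0, W) \ ⋃_{i=1}^k [L_i, R_i), and f preserves Lebesgue measure (it is a piecewise translation). -/
import Mathlib

open Finset MeasureTheory

namespace ShiftFnAux

/-- partial sums of lengths -/
noncomputable def S (L R : ℕ → ℝ) (n : ℕ) : ℝ := ∑ j ∈ Finset.range n, (R j - L j)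

/-- shifted left endpoints -/
noncomputable def L' (L R : ℕ → ℝ) (i : ℕ) : ℝ := L i - S L R i

variable {k : ℕ} {L R : ℕ → ℝ}

lemma S_succ (L R : ℕ → ℝ) (n : ℕ) : S L R (n + 1) = S L R n + (R n - L n) :=
  Finset.sum_range_succ _ _

lemma S_mono (hLR : ∀ i < k, L i < R i) {m n : ℕ} (hmn : m ≤ n) (hn : n ≤ k) :
    S L R m ≤ S L R n := by
  apply Finset.sum_le_sum_of_subset_of_nonneg (Finset.range_subset_range.2 hmn)
  intro i hi _
  have : i < k := lt_of_lt_of_le (Finset.mem_range.1 hi) hn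
  linarith [hLR i this]

lemma R_eq (L R : ℕ → ℝ) (n : ℕ) : R n = L' L R n + S L R (n + 1) := by
  rw [L', S_succ]; ring

lemma L'_mono (hLR : ∀ i < k, L i < R i) (hord : ∀ i, i + 1 < k → R i ≤ L (i + 1))
    {i j : ℕ} (hij : i ≤ j) (hj : j < k) : L' L R i ≤ L' L R j := by
  induction j, hij using Nat.le_induction with
  | base => exact le_rfl
  | succ n hn ih =>
    have hnk : n < k := by omega
    have h1 : L' L R i ≤ L' L R n := ih hnk
    have h2 : L' L R n ≤ L' L R (n + 1) := by
      have := hord n hj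
      have := hLR n hnk
      simp only [L', S_succ]
      linarith
    linarith

lemma L'_nonneg (hLR : ∀ i < k, L i < R i) (hord : ∀ i, i + 1 < k → R i ≤ L (i + 1))
    (h0 : 0 ≤ L 0) {i : ℕ} (hi : i < k) : 0 ≤ L' L R i := by
  have : L' L R 0 ≤ L' L R i := L'_mono hLR hord (Nat.zero_le i) hi
  have h00 : L' L R 0 = L 0 := by simp [L', S]
  linarith

lemma sum_ite_lt (hn : n ≤ k) :
    (∑ i ∈ Finset.range k, if i < n then R i - L i else 0) = S L R n := by
  rw [← Finset.sum_filter]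
  have h : (Finset.range k).filter (fun i => i < n) = Finset.range n := by
    ext i
    simp only [Finset.mem_filter, Finset.mem_range]
    omega
  rw [h, S]

lemma sum_eq {r : ℝ} {n : ℕ} (hn : n ≤ k)
    (h1 : ∀ i < n, L' L R i ≤ r) (h2 : ∀ i, n ≤ i → i < k → r < L' L R i) :
    (∑ i ∈ Finset.range k,
      if L i - ∑ j ∈ Finset.range i, (R j - L j) ≤ r then R i - L i else 0) = S L R n := by
  rw [← sum_ite_lt hn]
  apply Finset.sum_congr rfl
  intro i hi
  rw [Finset.mem_range] at hi
  have hrfl : L i - ∑ j ∈ Finset.range i, (R j - L j) = L' L R i := rfl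
  rw [hrfl]
  by_cases h : i < n
  · rw [if_pos h, if_pos (h1 i h)]
  · rw [if_neg h, if_neg (not_le.2 (h2 i (le_of_not_gt h) hi))]

lemma measure_biUnion_separated (μ : Measure ℝ) :
    ∀ (N : ℕ) (t G : ℕ → Set ℝ),
      (∀ n < N, MeasurableSet (G n)) →
      (∀ n < N, t n ⊆ G n) →
      (∀ m n, m < n → n < N → Disjoint (G m) (G n)) →
      μ (⋃ n ∈ Finset.range N, t n) = ∑ n ∈ Finset.range N, μ (t n) := by
  intro N
  induction N with
  | zero => intro t G _ _ _; simp
  | succ N ih =>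
    intro t G hmeas hsub hdisj
    have key := measure_inter_add_diff (μ := μ)
      (⋃ n ∈ Finset.range (N + 1), t n) (hmeas N (Nat.lt_succ_self N))
    have hinter : (⋃ n ∈ Finset.range (N + 1), t n) ∩ G N = t N := by
      apply Set.Subset.antisymm
      · rintro x ⟨hx1, hx2⟩
        simp only [Set.mem_iUnion, Finset.mem_range] at hx1
        obtain ⟨m, hm, hxm⟩ := hx1
        rcases Nat.lt_succ_iff_lt_or_eq.1 hm with h | h
        · exact absurd (Set.disjoint_left.1 (hdisj m N h (Nat.lt_succ_self N))
            (hsub m (by omega) hxm) hx2) (fun h => h)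
        · rwa [h] at hxm
      · intro x hx
        exact ⟨Set.mem_biUnion (Finset.self_mem_range_succ N) hx,
          hsub N (Nat.lt_succ_self N) hx⟩
    have hdiff : (⋃ n ∈ Finset.range (N + 1), t n) \ G N = ⋃ n ∈ Finset.range N, t n := by
      apply Set.Subset.antisymm
      · rintro x ⟨hx1, hx2⟩
        simp only [Set.mem_iUnion, Finset.mem_range] at hx1 ⊢
        obtain ⟨m, hm, hxm⟩ := hx1
        rcases Nat.lt_succ_iff_lt_or_eq.1 hm with h | h
        · exact ⟨m, h, hxm⟩
        · exact absurd (hsub N (Nat.lt_succ_self N) (h ▸ hxm)) hx2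
      · intro x hx
        simp only [Set.mem_iUnion, Finset.mem_range] at hx
        obtain ⟨m, hm, hxm⟩ := hx
        refine ⟨Set.mem_biUnion (Finset.mem_range.2 (Nat.lt_succ_of_lt hm)) hxm, ?_⟩
        exact Set.disjoint_left.1 (hdisj m N hm (Nat.lt_succ_self N)) (hsub m (by omega) hxm)
    rw [hinter, hdiff] at key
    rw [Finset.sum_range_succ, ← key,
      ih t G (fun n hn => hmeas n (by omega)) (fun n hn => hsub n (by omega))
        (fun m n hmn hn => hdisj m n hmn (by omega)), add_comm]

lemma Ico_subset_biUnion (p : ℕ → ℝ) :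
    ∀ N, Set.Ico (p 0) (p N) ⊆ ⋃ n ∈ Finset.range N, Set.Ico (p n) (p (n + 1)) := by
  intro N
  induction N with
  | zero => simp
  | succ N ih =>
    intro x ⟨hx1, hx2⟩
    by_cases h : p N ≤ x
    · exact Set.mem_biUnion (Finset.self_mem_range_succ N) ⟨h, hx2⟩
    · have := ih ⟨hx1, lt_of_not_ge h⟩
      simp only [Set.mem_iUnion, Finset.mem_range] at this ⊢
      obtain ⟨m, hm, hxm⟩ := this
      exact ⟨m, Nat.lt_succ_of_lt hm, hxm⟩

lemma volume_image_add (c : ℝ) (s : Set ℝ) : volume ((fun x => x + c) '' s) = volume s := by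
  have h : (fun x : ℝ => x + c) '' s = (fun x : ℝ => x + (-c)) ⁻¹' s := by
    ext x
    simp only [Set.mem_image, Set.mem_preimage]
    constructor
    · rintro ⟨y, hy, rfl⟩; simpa using hy
    · intro hx; exact ⟨x + -c, hx, by ring⟩
  rw [h, measure_preimage_add_right]

end ShiftFnAux
open ShiftFnAux in
/-- Correctness of the `modRandom` shift function: shifting past the forbidden
intervals is a strictly increasing, measure-preserving bijection from
`[0, W - T)` onto `[0, W) \ ⋃ᵢ [Lᵢ, Rᵢ)`. -/
theorem shift_function_bijection
    (W : ℝ) (hW : 0 < W) (k : ℕ) (hk : 0 < k) (L R : ℕ → ℝ)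
    (hLR : ∀ i < k, L i < R i)
    (hord : ∀ i, i + 1 < k → R i ≤ L (i + 1))
    (h0 : 0 ≤ L 0) (hWk : R (k - 1) ≤ W) :
    ∀ T f,
      T = ∑ i ∈ range k, (R i - L i) →
      f = (fun r : ℝ => r +
        ∑ i ∈ range k,
          if L i - ∑ j ∈ range i, (R j - L j) ≤ r then R i - L i else 0) →
      StrictMonoOn f (Set.Ico 0 (W - T)) ∧
      Set.BijOn f (Set.Ico 0 (W - T))
        (Set.Ico 0 W \ ⋃ i ∈ range k, Set.Ico (L i) (R i)) ∧
      (∀ s : Set ℝ, s ⊆ Set.Ico 0 (W - T) → volume (f '' s) = volume s) := by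
  intro T f hT hf
  classical
  have hTS : T = S L R k := hT
  have hf' : ∀ r : ℝ, f r = r +
      ∑ i ∈ range k,
        if L i - ∑ j ∈ range i, (R j - L j) ≤ r then R i - L i else 0 := by
    intro r; rw [hf]
  have hrfl : ∀ i : ℕ, L i - ∑ j ∈ range i, (R j - L j) = L' L R i := fun i => rfl
  -- the sum is monotone in r
  have hsum_mono : ∀ a b : ℝ, a ≤ b →
      (∑ i ∈ range k, if L i - ∑ j ∈ range i, (R j - L j) ≤ a then R i - L i else 0) ≤
      (∑ i ∈ range k, if L i - ∑ j ∈ range i, (R j - L j) ≤ b then R i - L i else 0) := by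
    intro a b hab
    apply Finset.sum_le_sum
    intro i hi
    rw [Finset.mem_range] at hi
    by_cases h : L i - ∑ j ∈ range i, (R j - L j) ≤ a
    · rw [if_pos h, if_pos (h.trans hab)]
    · rw [if_neg h]
      by_cases h2 : L i - ∑ j ∈ range i, (R j - L j) ≤ b
      · rw [if_pos h2]; linarith [hLR i hi]
      · rw [if_neg h2]
  have hsum_nonneg : ∀ r : ℝ, 0 ≤
      ∑ i ∈ range k, if L i - ∑ j ∈ range i, (R j - L j) ≤ r then R i - L i else 0 := by
    intro r
    apply Finset.sum_nonneg
    intro i hi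
    rw [Finset.mem_range] at hi
    split_ifs
    · linarith [hLR i hi]
    · exact le_rfl
  have hsum_le : ∀ r : ℝ,
      (∑ i ∈ range k, if L i - ∑ j ∈ range i, (R j - L j) ≤ r then R i - L i else 0) ≤
      S L R k := by
    intro r
    apply Finset.sum_le_sum
    intro i hi
    rw [Finset.mem_range] at hi
    split_ifs
    · exact le_rfl
    · linarith [hLR i hi]
  have hmono : StrictMonoOn f (Set.Ico 0 (W - T)) := by
    intro a _ b _ hab
    rw [hf' a, hf' b]
    have := hsum_mono a b hab.le
    linarith
  have hmaps : Set.MapsTo f (Set.Ico 0 (W - T))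
      (Set.Ico 0 W \ ⋃ i ∈ range k, Set.Ico (L i) (R i)) := by
    rintro r ⟨hr0, hrW⟩
    rw [hTS] at hrW
    constructor
    · refine ⟨?_, ?_⟩
      · rw [hf' r]; linarith [hsum_nonneg r]
      · rw [hf' r]; linarith [hsum_le r]
    · intro hmem
      simp only [Set.mem_iUnion, Set.mem_Ico, Finset.mem_range] at hmem
      obtain ⟨i, hik, hLi, hRi⟩ := hmem
      rw [hf' r] at hLi hRi
      by_cases hcase : L' L R i ≤ r
      · -- then f r ≥ R i
        have hA : (∑ j ∈ range (i+1), (R j - L j)) ≤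
            ∑ j ∈ range (i+1),
              (if L j - ∑ l ∈ range j, (R l - L l) ≤ r then R j - L j else 0) := by
          apply Finset.sum_le_sum
          intro j hj
          rw [Finset.mem_range, Nat.lt_succ_iff] at hj
          have hjr : L' L R j ≤ r := le_trans (L'_mono hLR hord hj hik) hcase
          rw [hrfl j, if_pos hjr]
        have hB : (∑ j ∈ range (i+1),
              (if L j - ∑ l ∈ range j, (R l - L l) ≤ r then R j - L j else 0)) ≤
            ∑ j ∈ range k,
              (if L j - ∑ l ∈ range j, (R l - L l) ≤ r then R j - L j else 0) := by
          apply Finset.sum_le_sum_of_subset_of_nonneg (Finset.range_subset_range.2 hik)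
          intro j hj _
          rw [Finset.mem_range] at hj
          split_ifs
          · linarith [hLR j hj]
          · exact le_rfl
        have hReq : R i = L' L R i + S L R (i + 1) := R_eq L R i
        have hSi : S L R (i+1) = ∑ j ∈ range (i+1), (R j - L j) := rfl
        rw [hSi] at hReq
        linarith
      · -- then f r < L i
        push_neg at hcase
        have hA : (∑ j ∈ range k,
              (if L j - ∑ l ∈ range j, (R l - L l) ≤ r then R j - L j else 0)) ≤
            ∑ j ∈ range k, (if j < i then R j - L j else 0) := by
          apply Finset.sum_le_sum
          intro j hj
          rw [Finset.mem_range] at hj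
          by_cases h2 : j < i
          · rw [if_pos h2]
            split_ifs
            · exact le_rfl
            · linarith [hLR j hj]
          · rw [if_neg h2]
            have : r < L' L R j :=
              lt_of_lt_of_le hcase (L'_mono hLR hord (le_of_not_gt h2) hj)
            rw [hrfl j, if_neg (not_le.2 this)]
        rw [sum_ite_lt (le_of_lt hik)] at hA
        have hL'i : L' L R i = L i - S L R i := rfl
        linarith
  have hsurj : Set.SurjOn f (Set.Ico 0 (W - T))
      (Set.Ico 0 W \ ⋃ i ∈ range k, Set.Ico (L i) (R i)) := by
    rintro y ⟨⟨hy0, hyW⟩, hy2⟩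
    simp only [Set.mem_iUnion, Set.mem_Ico, Finset.mem_range, not_exists, not_and,
      not_lt] at hy2
    have hex : ∃ n, k ≤ n ∨ y < R n := ⟨k, Or.inl le_rfl⟩
    set n := Nat.find hex with hn_def
    have hnk : n ≤ k := Nat.find_min' hex (Or.inl le_rfl)
    have hmin : ∀ i < n, i < k ∧ R i ≤ y := by
      intro i hi
      have := Nat.find_min hex hi
      push_neg at this
      exact this
    have hyLn : n < k → y < L n := by
      intro h
      have hspec := Nat.find_spec hex
      rw [← hn_def] at hspec
      have hyRn : y < R n := by
        rcases hspec with h1 | h2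
        · omega
        · exact h2
      by_contra hcon
      push_neg at hcon
      exact absurd (hy2 n h hcon) (not_le.2 hyRn)
    set r := y - S L R n with hr_def
    have h1 : ∀ i < n, L' L R i ≤ r := by
      intro i hi
      obtain ⟨hik, hRiy⟩ := hmin i hi
      have hn1k : n - 1 < k := by omega
      have hm : L' L R i ≤ L' L R (n-1) := L'_mono hLR hord (by omega) hn1k
      have hRy : R (n-1) ≤ y := (hmin (n-1) (by omega)).2
      have hReq : R (n-1) = L' L R (n-1) + S L R ((n-1) + 1) := R_eq L R (n-1)
      have hnn : (n-1) + 1 = n := by omega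
      rw [hnn] at hReq
      rw [hr_def]
      linarith
    have h2 : ∀ i, n ≤ i → i < k → r < L' L R i := by
      intro i hni hik
      have hnk' : n < k := lt_of_le_of_lt hni hik
      have hyL := hyLn hnk'
      have hm : L' L R n ≤ L' L R i := L'_mono hLR hord hni hik
      have hL'n : L' L R n = L n - S L R n := rfl
      rw [hr_def]
      linarith
    have hsum := sum_eq (L := L) (R := R) hnk h1 h2
    have hr0 : 0 ≤ r := by
      rcases Nat.eq_zero_or_pos n with hn0 | hpos
      · have : S L R n = 0 := by rw [hn0]; simp [S]
        rw [hr_def, this]; linarith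
      · have hn1k : n - 1 < k := by omega
        have hRy : R (n-1) ≤ y := (hmin (n-1) (by omega)).2
        have hReq : R (n-1) = L' L R (n-1) + S L R ((n-1) + 1) := R_eq L R (n-1)
        have hnn : (n-1) + 1 = n := by omega
        rw [hnn] at hReq
        have := L'_nonneg hLR hord h0 hn1k
        rw [hr_def]
        linarith
    have hrW : r < W - T := by
      rw [hTS]
      rcases eq_or_lt_of_le hnk with heq | hlt
      · rw [hr_def, heq]; linarith
      · have hyL := hyLn hlt
        have hm : L' L R n ≤ L' L R (k-1) := L'_mono hLR hord (by omega) (by omega)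
        have hReq : R (k-1) = L' L R (k-1) + S L R ((k-1) + 1) := R_eq L R (k-1)
        have hkk : (k-1) + 1 = k := by omega
        rw [hkk] at hReq
        have hL'n : L' L R n = L n - S L R n := rfl
        rw [hr_def]
        linarith
    refine ⟨r, ⟨hr0, hrW⟩, ?_⟩
    rw [hf' r, hsum, hr_def]
    ring
  refine ⟨hmono, ⟨hmaps, hmono.injOn, hsurj⟩, ?_⟩
  -- measure preservation
  intro s hs
  set p : ℕ → ℝ := fun n => if n = 0 then 0 else if n ≤ k then L' L R (n-1) else W - T
    with hp_def
  have hp0 : p 0 = 0 := by simp [hp_def]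
  have hpk1 : p (k+1) = W - T := by
    have h1 : ¬(k + 1 = 0) := by omega
    have h2 : ¬(k + 1 ≤ k) := by omega
    simp [hp_def, h1, h2]
  have hpmid : ∀ n, 1 ≤ n → n ≤ k → p n = L' L R (n-1) := by
    intro n h1 h2
    have : ¬(n = 0) := by omega
    simp [hp_def, this, h2]
  have hp_mono : Monotone p := by
    apply monotone_nat_of_le_succ
    intro n
    rcases Nat.eq_zero_or_pos n with rfl | hpos
    · rw [hp0, hpmid 1 le_rfl hk]
      have : L' L R 0 = L 0 := by simp [L', S]
      rw [this]; exact h0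
    · rcases lt_or_ge n k with hlt | hle
      · rw [hpmid n hpos (le_of_lt hlt)]
        rcases eq_or_lt_of_le (Nat.succ_le_of_lt hlt) with heq | hlt2
        · -- n + 1 = k
          rw [hpmid (n+1) (by omega) (by omega)]
          exact L'_mono hLR hord (by omega) (by omega)
        · rw [hpmid (n+1) (by omega) (by omega)]
          exact L'_mono hLR hord (by omega) (by omega)
      · -- n ≥ k : p (n+1) = W - T, p n = L'(k-1) or W - T
        have hpn1 : p (n+1) = W - T := by
          have h1 : ¬(n + 1 = 0) := by omega
          have h2 : ¬(n + 1 ≤ k) := by omega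
          simp [hp_def, h1, h2]
        rw [hpn1]
        rcases eq_or_lt_of_le hle with heq | hlt
        · subst heq
          rw [hpmid k (by omega) le_rfl]
          have hReq : R (k-1) = L' L R (k-1) + S L R ((k-1) + 1) := R_eq L R (k-1)
          have hkk : (k-1) + 1 = k := by omega
          rw [hkk] at hReq
          linarith [hWk, hTS.le, hTS.ge]
        · have h1 : ¬(n = 0) := by omega
          have h2 : ¬(n ≤ k) := by omega
          simp [hp_def, h1, h2]
  -- f acts as translation by S n on [p n, p (n+1))
  have hfseg : ∀ n, n ≤ k → ∀ x ∈ Set.Ico (p n) (p (n+1)), f x = x + S L R n := by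
    rintro n hn x ⟨hx1, hx2⟩
    rw [hf' x]
    congr 1
    apply sum_eq hn
    · intro i hi
      have hb : 1 ≤ n := by omega
      have hn1k : n - 1 < k := by omega
      have hm : L' L R i ≤ L' L R (n-1) := L'_mono hLR hord (by omega) hn1k
      rw [hpmid n hb hn] at hx1
      linarith
    · intro i hni hik
      have hnk' : n < k := lt_of_le_of_lt hni hik
      have hm : L' L R n ≤ L' L R i := L'_mono hLR hord hni hik
      rw [hpmid (n+1) (by omega) (by omega)] at hx2
      simp only [Nat.add_sub_cancel] at hx2
      linarith
  have hcover : s = ⋃ n ∈ range (k+1), s ∩ Set.Ico (p n) (p (n+1)) := by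
    apply Set.Subset.antisymm
    · intro x hx
      have hx' : x ∈ Set.Ico (p 0) (p (k+1)) := by
        rw [hp0, hpk1]; exact hs hx
      have hcov := Ico_subset_biUnion p (k+1) hx'
      simp only [Set.mem_iUnion, Finset.mem_range] at hcov ⊢
      obtain ⟨m, hm, hxm⟩ := hcov
      exact ⟨m, hm, hx, hxm⟩
    · exact Set.iUnion₂_subset fun n _ => Set.inter_subset_left
  have hμs : volume s = ∑ n ∈ range (k+1), volume (s ∩ Set.Ico (p n) (p (n+1))) := by
    conv_lhs => rw [hcover]
    apply measure_biUnion_separated volume (k+1) _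
      (fun n => Set.Ico (p n) (p (n+1)))
    · exact fun n _ => measurableSet_Ico
    · exact fun n _ => Set.inter_subset_right
    · intro m n hmn _
      apply Set.Ico_disjoint_Ico.2
      have h1 : p (m+1) ≤ p n := hp_mono hmn
      calc min (p (m+1)) (p (n+1)) ≤ p (m+1) := min_le_left _ _
        _ ≤ p n := h1
        _ ≤ max (p m) (p n) := le_max_right _ _
  have himg : f '' s =
      ⋃ n ∈ range (k+1), (fun x => x + S L R n) '' (s ∩ Set.Ico (p n) (p (n+1))) := by
    conv_lhs => rw [hcover]
    rw [Set.image_iUnion₂]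
    apply Set.iUnion₂_congr
    intro n hn
    rw [Finset.mem_range] at hn
    apply Set.image_congr
    intro x hx
    exact hfseg n (by omega) x hx.2
  have hμimg : volume (f '' s) =
      ∑ n ∈ range (k+1),
        volume ((fun x => x + S L R n) '' (s ∩ Set.Ico (p n) (p (n+1)))) := by
    rw [himg]
    apply measure_biUnion_separated volume (k+1) _
      (fun n => Set.Ico (p n + S L R n) (p (n+1) + S L R n))
    · exact fun n _ => measurableSet_Ico
    · rintro n _ _ ⟨x, ⟨hxs, hx1, hx2⟩, rfl⟩
      have hb : (fun x : ℝ => x + S L R n) x = x + S L R n := rfl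
      rw [hb]
      exact ⟨by linarith, by linarith⟩
    · intro m n hmn hnN
      apply Set.Ico_disjoint_Ico.2
      have h1 : p (m+1) ≤ p n := hp_mono hmn
      have h2 : S L R m ≤ S L R n := S_mono hLR (le_of_lt hmn) (by omega)
      calc min (p (m+1) + S L R m) (p (n+1) + S L R n)
          ≤ p (m+1) + S L R m := min_le_left _ _
        _ ≤ p n + S L R n := by linarith
        _ ≤ max (p m + S L R m) (p n + S L R n) := le_max_right _ _
  rw [hμs, hμimg]
  exact Finset.sum_congr rfl fun n _ => volume_image_add _ _
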